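/- arXiv:2303.05636 — 10 statements merged into one kernel-verified Lean document; each statement's English description precedes it below -/
import Mathlib

section
/- Let a, b, β ∈ ℝ with a > 0, b > 0, β > 0 and βa ≤ b. Then there exists no sequence p : ℕ → ℝ such that for all t ∈ ℕ, p_t > 0 and p_{t+1}·(βa − (1+β)·p_t) = b·p_t. -/
/-!
In terms of `q t = (p t)⁻¹` the price recursion becomes linear,
`b * q (t + 1) = β * a * q t - (1 + β)`, so when `β * a ≤ b` the reciprocal price drops by at
least `(1 + β) / b` every period and cannot stay positive.
-/

theorem le_sub_nsmul_of_le_sub {α : Type*} [AddCommGroup α] [PartialOrder α]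
    [IsOrderedAddMonoid α] {q : ℕ → α} {ε : α} (hq : ∀ t, q (t + 1) ≤ q t - ε) (t : ℕ) :
    q t ≤ q 0 - t • ε := by
  induction t with
  | zero => simp
  | succ t ih =>
    calc q (t + 1) ≤ q t - ε := hq t
      _ ≤ q 0 - t • ε - ε := sub_le_sub_right ih ε
      _ = q 0 - (t + 1) • ε := by rw [succ_nsmul, sub_add_eq_sub_sub]

theorem exists_nonpos_of_le_sub {α : Type*} [AddCommGroup α] [LinearOrder α]
    [IsOrderedAddMonoid α] [Archimedean α] {q : ℕ → α} {ε : α} (hε : 0 < ε)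
    (hq : ∀ t, q (t + 1) ≤ q t - ε) : ∃ t, q t ≤ 0 := by
  obtain ⟨n, hn⟩ := Archimedean.arch (q 0) hε
  exact ⟨n, (le_sub_nsmul_of_le_sub hq n).trans (sub_nonpos.2 hn)⟩

theorem inv_le_inv_sub_of_price_recursion {a b β x y : ℝ} (hb : 0 < b) (h : β * a ≤ b)
    (hx : 0 < x) (hy : 0 < y) (hxy : y * (β * a - (1 + β) * x) = b * x) :
    y⁻¹ ≤ x⁻¹ - (1 + β) / b := by
  have hlin : b * y⁻¹ = β * a * x⁻¹ - (1 + β) := by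
    field_simp
    linarith
  refine le_of_mul_le_mul_left ?_ hb
  calc b * y⁻¹ = β * a * x⁻¹ - (1 + β) := hlin
    _ ≤ b * x⁻¹ - (1 + β) := by gcongr
    _ = b * (x⁻¹ - (1 + β) / b) := by field_simp

theorem no_bubble_when_beta_a_le_b_general (a b β : ℝ) (hb : 0 < b) (hβ : 0 < β)
    (h : β * a ≤ b) :
    ¬ ∃ p : ℕ → ℝ, ∀ t : ℕ, 0 < p t ∧ p (t + 1) * (β * a - (1 + β) * p t) = b * p t := by
  rintro ⟨p, hp⟩
  obtain ⟨t, ht⟩ := exists_nonpos_of_le_sub (q := fun t => (p t)⁻¹)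
    (by positivity : 0 < (1 + β) / b)
    fun t => inv_le_inv_sub_of_price_recursion hb h (hp t).1 (hp (t + 1)).1 (hp t).2
  exact ht.not_gt (inv_pos.2 (hp t).1)

theorem no_bubble_when_beta_a_le_b (a b β : ℝ) (ha : 0 < a) (hb : 0 < b) (hβ : 0 < β)
    (h : β * a ≤ b) :
    ¬ ∃ p : ℕ → ℝ, ∀ t : ℕ, 0 < p t ∧ p (t + 1) * (β * a - (1 + β) * p t) = b * p t :=
  no_bubble_when_beta_a_le_b_general a b β hb hβ h
end

section
/- Let a, b, β, G ∈ ℝ with a, b, β, G > 0, βa > b, and let P_0 ∈ ℝ satisfy 0 < P_0 ≤ (βa − b)/(1+β). Define P : ℕ → ℝ by P_t = G^t / [ (βa/b)^t·(1/P_0 − (1+β)/(βa − b)) + (1+β)/(βa − b) ]. Then for all t ∈ ℕ: P_t > 0, aG^t − P_t > 0, and P_{t+1}·(βaG^t − (1+β)P_t) = bG^{t+1}·P_t. -/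
/-!
Writing `P t = G ^ t / D t`, the equilibrium recurrence for `P` becomes the affine recurrence
`b * D (t + 1) = β * a * D t - (1 + β)` for `D`, whose solutions are `r ^ t * c + k` with
`r = β * a / b` and fixed point `k = (1 + β) / (β * a - b)`. The bound on `P₀` says `c ≥ 0`, so
`D t ≥ k > 1 / a`, which gives both `P t > 0` and `P t < a * G ^ t`.
-/

theorem pow_mul_add_affine_recurrence {R : Type*} [CommRing R] {b s q r c k : R}
    (hr : b * r = s) (hk : (s - b) * k = q) (t : ℕ) :
    b * (r ^ (t + 1) * c + k) = s * (r ^ t * c + k) - q := by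
  linear_combination (r ^ t * c) * hr - hk

theorem div_recurrence_of_affine_recurrence {K : Type*} [Field K] {b s q D D' x y : K}
    (hD : D ≠ 0) (hD' : D' ≠ 0) (hrec : b * D' = s * D - q) :
    y / D' * (s * x - q * (x / D)) = b * y * (x / D) := by
  field_simp
  linear_combination -(x * y) * hrec

theorem div_lt_mul_of_one_div_lt {a D x : ℝ} (ha : 0 < a) (hx : 0 < x) (hD : 1 / a < D) :
    x / D < a * x := by
  have hD₀ : 0 < D := lt_trans (by positivity) hD
  rw [div_lt_iff₀ hD₀]
  have : 1 < a * D := by rwa [div_lt_iff₀ ha, mul_comm] at hD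
  nlinarith

theorem continuum_of_bubbly_equilibria (a b β G : ℝ)
    (ha : 0 < a) (hb : 0 < b) (hβ : 0 < β) (hG : 0 < G) (hab : b < β * a)
    (P₀ : ℝ) (hP₀ : 0 < P₀) (hP₀' : P₀ ≤ (β * a - b) / (1 + β))
    (P : ℕ → ℝ)
    (hP : ∀ t : ℕ, P t = G ^ t /
      ((β * a / b) ^ t * (1 / P₀ - (1 + β) / (β * a - b)) + (1 + β) / (β * a - b))) :
    ∀ t : ℕ, 0 < P t ∧ 0 < a * G ^ t - P t ∧
      P (t + 1) * (β * a * G ^ t - (1 + β) * P t) = b * G ^ (t + 1) * P t := by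
  have hba : 0 < β * a - b := by linarith
  set k := (1 + β) / (β * a - b)
  set c := 1 / P₀ - k
  set D : ℕ → ℝ := fun t => (β * a / b) ^ t * c + k with hD
  have hk : (β * a - b) * k = 1 + β := mul_div_cancel₀ _ hba.ne'
  have hc : 0 ≤ c := by
    have := one_div_le_one_div_of_le hP₀ hP₀'
    rw [one_div_div] at this
    linarith
  have hk_gt : 1 / a < k := by
    rw [div_lt_div_iff₀ ha hba]
    linarith
  have hD_gt : ∀ t, 1 / a < D t := fun t => by
    have : 0 ≤ (β * a / b) ^ t * c := mul_nonneg (by positivity) hc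
    simp only [hD]
    linarith
  have hD_ne : ∀ t, D t ≠ 0 := fun t => (lt_trans (by positivity) (hD_gt t)).ne'
  intro t
  refine ⟨?_, ?_, ?_⟩
  · rw [hP t]
    exact div_pos (pow_pos hG t) (lt_trans (by positivity) (hD_gt t))
  · rw [hP t, sub_pos]
    exact div_lt_mul_of_one_div_lt ha (pow_pos hG t) (hD_gt t)
  · rw [hP t, hP (t + 1)]
    refine div_recurrence_of_affine_recurrence (hD_ne t) (hD_ne (t + 1)) ?_
    exact pow_mul_add_affine_recurrence (by field_simp) hk t
end

section
/- Let a, β ∈ ℝ with a > 0, β > 0. The function f(p) = (1+β)·log(a − p) − β·log(βa − (1+β)p) is strictly increasing on the interval (0, βa/(1+β)); moreover, for every p in this interval, f is differentiable at p with f'(p) = (1+β)p/((a − p)(βa − (1+β)p)) > 0. -/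
open Real Set

noncomputable def priceUtility (a β p : ℝ) : ℝ :=
  (1 + β) * log (a - p) - β * log (β * a - (1 + β) * p)

lemma hasDerivAt_priceUtility {a β p : ℝ} (h₁ : a - p ≠ 0) (h₂ : β * a - (1 + β) * p ≠ 0) :
    HasDerivAt (priceUtility a β) ((1 + β) * p / ((a - p) * (β * a - (1 + β) * p))) p := by
  have hlog₁ : HasDerivAt (fun p => log (a - p)) (-1 / (a - p)) p := by
    simpa using ((hasDerivAt_id p).const_sub a).log h₁
  have hlog₂ : HasDerivAt (fun p => log (β * a - (1 + β) * p))
      (-(1 + β) / (β * a - (1 + β) * p)) p := by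
    simpa using (((hasDerivAt_id p).const_mul (1 + β)).const_sub (β * a)).log h₂
  -- Over the common denominator the numerator is `(1 + β) * (β * (a - p) - (β * a - (1 + β) * p))`,
  -- and the bracket collapses to `p`.
  refine ((hlog₁.const_mul (1 + β)).sub (hlog₂.const_mul β)).congr_deriv ?_
  field_simp
  ring

section Interval

variable {a β p : ℝ} (hβ : 0 < β) (hp : p ∈ Ioo 0 (β * a / (1 + β)))
include hβ hp

lemma one_add_mul_lt_of_mem_Ioo : (1 + β) * p < β * a := by
  rw [mul_comm]
  exact (lt_div_iff₀ (by linarith)).mp hp.2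

lemma lt_of_mem_Ioo_mul_div_one_add : p < a := by
  have : β * p < β * a := by nlinarith [one_add_mul_lt_of_mem_Ioo hβ hp, hp.1]
  exact lt_of_mul_lt_mul_left this hβ.le

lemma hasDerivAt_priceUtility_of_mem :
    HasDerivAt (priceUtility a β) ((1 + β) * p / ((a - p) * (β * a - (1 + β) * p))) p :=
  hasDerivAt_priceUtility (sub_pos.2 (lt_of_mem_Ioo_mul_div_one_add hβ hp)).ne'
    (sub_pos.2 (one_add_mul_lt_of_mem_Ioo hβ hp)).ne'

lemma deriv_priceUtility_pos : 0 < (1 + β) * p / ((a - p) * (β * a - (1 + β) * p)) :=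
  div_pos (mul_pos (by linarith) hp.1) (mul_pos (sub_pos.2 (lt_of_mem_Ioo_mul_div_one_add hβ hp))
    (sub_pos.2 (one_add_mul_lt_of_mem_Ioo hβ hp)))

end Interval

lemma strictMonoOn_priceUtility {a β : ℝ} (hβ : 0 < β) :
    StrictMonoOn (priceUtility a β) (Ioo 0 (β * a / (1 + β))) := by
  refine strictMonoOn_of_deriv_pos (convex_Ioo _ _)
    (fun p hp => (hasDerivAt_priceUtility_of_mem hβ hp).continuousAt.continuousWithinAt) ?_
  rw [interior_Ioo]
  intro p hp
  rw [(hasDerivAt_priceUtility_of_mem hβ hp).deriv]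
  exact deriv_priceUtility_pos hβ hp

theorem utility_strictly_increasing_in_price_general (a β : ℝ) (hβ : 0 < β) :
    StrictMonoOn
      (fun p : ℝ => (1 + β) * Real.log (a - p) - β * Real.log (β * a - (1 + β) * p))
      (Set.Ioo 0 (β * a / (1 + β))) ∧
    ∀ p ∈ Set.Ioo (0 : ℝ) (β * a / (1 + β)),
      HasDerivAt
        (fun p : ℝ => (1 + β) * Real.log (a - p) - β * Real.log (β * a - (1 + β) * p))
        ((1 + β) * p / ((a - p) * (β * a - (1 + β) * p))) p ∧
      0 < (1 + β) * p / ((a - p) * (β * a - (1 + β) * p)) :=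
  ⟨strictMonoOn_priceUtility hβ, fun _ hp =>
    ⟨hasDerivAt_priceUtility_of_mem hβ hp, deriv_priceUtility_pos hβ hp⟩⟩

theorem utility_strictly_increasing_in_price (a β : ℝ) (ha : 0 < a) (hβ : 0 < β) :
    StrictMonoOn
      (fun p : ℝ => (1 + β) * Real.log (a - p) - β * Real.log (β * a - (1 + β) * p))
      (Set.Ioo 0 (β * a / (1 + β))) ∧
    ∀ p ∈ Set.Ioo (0 : ℝ) (β * a / (1 + β)),
      HasDerivAt
        (fun p : ℝ => (1 + β) * Real.log (a - p) - β * Real.log (β * a - (1 + β) * p))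
        ((1 + β) * p / ((a - p) * (β * a - (1 + β) * p))) p ∧
      0 < (1 + β) * p / ((a - p) * (β * a - (1 + β) * p)) :=
  utility_strictly_increasing_in_price_general a β hβ
end

section
/- Let a, b, β, G ∈ ℝ with a, b, β, G > 0 and βa > b. For P_0 ∈ (0, (βa − b)/(1+β)] define P_t(P_0) = G^t / [ (βa/b)^t·(1/P_0 − (1+β)/(βa − b)) + (1+β)/(βa − b) ], and define P_t(0) = 0 for all t. Suppose 0 ≤ P_0 < P_0' ≤ (βa − b)/(1+β). Then b + P_0(P_0) < b + P_0(P_0') (the initial old strictly prefer the second equilibrium), and for every t ∈ ℕ, log(aG^t − P_t(P_0)) + β·log(bG^{t+1} + P_{t+1}(P_0)) < log(aG^t − P_t(P_0')) + β·log(bG^{t+1} + P_{t+1}(P_0')). -/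
/-!
Write `x_t = G ^ t / P_t`. The equilibrium price recursion is then affine,
`b x_{t+1} = β a x_t - (1 + β)`, and it is exactly the first-order condition of the young at `t`
choosing their savings `P_t` at the gross return `r_t = P_{t+1} / P_t`. A higher initial price
gives a smaller `x_t`, hence a higher price `P_t` and, through the recursion, a higher return `r_t`
at every date. So generation `t`'s bundle in the lower equilibrium is affordable at the return of
the higher one, yet differs from the bundle chosen there; by strict concavity of the utility
(tangent-line bounds for `log`) the chosen bundle is strictly better. The initial old simply
consume `b + P_0`.
-/

open Real

lemma log_lt_log_add_div {x y : ℝ} (hx : 0 < x) (hy : 0 < y) (hxy : x ≠ y) :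
    log x < log y + (x - y) / y := by
  have h := log_lt_sub_one_of_pos (div_pos hx hy) (div_ne_one_of_ne hxy)
  rw [log_div hx.ne' hy.ne', div_sub_one hy.ne'] at h
  linarith

lemma log_le_log_add_div {x y : ℝ} (hx : 0 < x) (hy : 0 < y) :
    log x ≤ log y + (x - y) / y := by
  have h := log_le_sub_one_of_pos (div_pos hx hy)
  rw [log_div hx.ne' hy.ne', div_sub_one hy.ne'] at h
  linarith

section Utility

variable {β A B r s s' p q p' q' : ℝ}

theorem log_sub_add_mul_log_add_lt_of_foc (hβ : 0 < β) (hs : s < A) (hs' : s' < A)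
    (hBs : 0 < B + r * s) (hBs' : 0 < B + r * s') (hne : s ≠ s')
    (hfoc : β * r * (A - s') = B + r * s') :
    log (A - s) + β * log (B + r * s) < log (A - s') + β * log (B + r * s') := by
  have hyoung := log_lt_log_add_div (sub_pos.2 hs) (sub_pos.2 hs') (by grind)
  have hold := mul_le_mul_of_nonneg_left (log_le_log_add_div hBs hBs') hβ.le
  have htangent : β * ((B + r * s - (B + r * s')) / (B + r * s')) = (s - s') / (A - s') := by
    field_simp [(sub_pos.2 hs').ne', hBs'.ne']
    linear_combination (s - s') * hfoc
  have hyoung' : (A - s - (A - s')) / (A - s') = -((s - s') / (A - s')) := by ring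
  linarith

theorem log_sub_add_mul_log_add_lt_of_affordable (hβ : 0 < β) (hp' : 0 < p') (hpA : p < A)
    (hp'A : p' < A) (hBq : 0 < B + q) (hBq' : 0 < B + q') (hne : p ≠ p')
    (hafford : q * p' ≤ p * q') (hfoc : β * q' * (A - p') = p' * (B + q')) :
    log (A - p) + β * log (B + q) < log (A - p') + β * log (B + q') := by
  set r := q' / p'
  have hq' : q' = r * p' := (div_mul_cancel₀ q' hp'.ne').symm
  have hqr : q ≤ r * p := by
    rw [div_mul_eq_mul_div, le_div_iff₀ hp']
    linarith
  rw [hq'] at hBq' hfoc ⊢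
  calc log (A - p) + β * log (B + q)
      ≤ log (A - p) + β * log (B + r * p) := by gcongr
    _ < log (A - p') + β * log (B + r * p') := by
      refine log_sub_add_mul_log_add_lt_of_foc hβ hpA hp'A (by linarith) hBq' hne ?_
      exact mul_left_cancel₀ hp'.ne' (by linear_combination hfoc)

end Utility

section Equilibrium

variable {a b β G Q Q' : ℝ} {t : ℕ}

/-- `G ^ t / P_t` in the equilibrium with initial price `Q`. -/
noncomputable def priceRecip (a b β Q : ℝ) (t : ℕ) : ℝ :=
  (β * a / b) ^ t * (1 / Q - (1 + β) / (β * a - b)) + (1 + β) / (β * a - b)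

noncomputable def eqPrice (a b β G Q : ℝ) (t : ℕ) : ℝ := G ^ t / priceRecip a b β Q t

lemma priceRecip_succ (hb : b ≠ 0) (hab : β * a - b ≠ 0) :
    b * priceRecip a b β Q (t + 1) = β * a * priceRecip a b β Q t - (1 + β) := by
  have hbR : b * (β * a / b) = β * a := mul_div_cancel₀ _ hb
  have hbD : β * a * ((1 + β) / (β * a - b)) - b * ((1 + β) / (β * a - b)) = 1 + β := by
    rw [← sub_mul, mul_div_cancel₀ _ hab]
  unfold priceRecip
  rw [pow_succ]
  linear_combination ((β * a / b) ^ t * (1 / Q - (1 + β) / (β * a - b))) * hbR - hbD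

lemma le_priceRecip (hb : 0 < b) (hab : b < β * a) (hQ : Q ∈ Set.Ioc 0 ((β * a - b) / (1 + β))) :
    (1 + β) / (β * a - b) ≤ priceRecip a b β Q t := by
  have hinv : (1 + β) / (β * a - b) ≤ 1 / Q := by
    simpa only [one_div_div] using one_div_le_one_div_of_le hQ.1 hQ.2
  have hR : 0 ≤ (β * a / b) ^ t := pow_nonneg (div_nonneg (hb.trans hab).le hb.le) t
  unfold priceRecip
  linarith [mul_nonneg hR (sub_nonneg.2 hinv)]

lemma priceRecip_pos (hb : 0 < b) (hab : b < β * a)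
    (hQ : Q ∈ Set.Ioc 0 ((β * a - b) / (1 + β))) : 0 < priceRecip a b β Q t := by
  have hD : 0 < (1 + β) / (β * a - b) := by
    rw [← one_div_div]
    exact one_div_pos.2 (hQ.1.trans_le hQ.2)
  exact hD.trans_le (le_priceRecip hb hab hQ)

lemma one_lt_mul_priceRecip (ha : 0 < a) (hb : 0 < b) (hab : b < β * a)
    (hQ : Q ∈ Set.Ioc 0 ((β * a - b) / (1 + β))) : 1 < a * priceRecip a b β Q t := by
  calc 1 < a * ((1 + β) / (β * a - b)) := by
        rw [mul_div_assoc', one_lt_div (by linarith)]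
        linarith
    _ ≤ a * priceRecip a b β Q t := mul_le_mul_of_nonneg_left (le_priceRecip hb hab hQ) ha.le

lemma priceRecip_lt_priceRecip (hb : 0 < b) (hab : b < β * a) (hQ : 0 < Q) (hQQ' : Q < Q') :
    priceRecip a b β Q' t < priceRecip a b β Q t := by
  have hR : 0 < (β * a / b) ^ t := pow_pos (div_pos (hb.trans hab) hb) t
  have hinv : 1 / Q' < 1 / Q := one_div_lt_one_div_of_lt hQ hQQ'
  unfold priceRecip
  linarith [mul_lt_mul_of_pos_left (sub_lt_sub_right hinv ((1 + β) / (β * a - b))) hR]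

/-- A higher initial price gives a higher return `x_t / x_{t+1}` at every date. -/
lemma priceRecip_mul_succ_le (hb : 0 < b) (hβ : 0 < β) (hab : b < β * a) (hQ : 0 < Q)
    (hQQ' : Q < Q') :
    priceRecip a b β Q t * priceRecip a b β Q' (t + 1) ≤
      priceRecip a b β Q (t + 1) * priceRecip a b β Q' t := by
  have hlt := priceRecip_lt_priceRecip (t := t) hb hab hQ hQQ'
  have hrec := priceRecip_succ (Q := Q) (t := t) hb.ne' (sub_pos.2 hab).ne'
  have hrec' := priceRecip_succ (Q := Q') (t := t) hb.ne' (sub_pos.2 hab).ne'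
  have hdiff : b * (priceRecip a b β Q (t + 1) * priceRecip a b β Q' t -
      priceRecip a b β Q t * priceRecip a b β Q' (t + 1)) =
      (1 + β) * (priceRecip a b β Q t - priceRecip a b β Q' t) := by
    linear_combination priceRecip a b β Q' t * hrec - priceRecip a b β Q t * hrec'
  have hnonneg : 0 ≤ b * (priceRecip a b β Q (t + 1) * priceRecip a b β Q' t -
      priceRecip a b β Q t * priceRecip a b β Q' (t + 1)) :=
    hdiff ▸ mul_nonneg (by linarith) (sub_nonneg.2 hlt.le)
  exact sub_nonneg.1 (nonneg_of_mul_nonneg_right hnonneg hb)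

lemma eqPrice_pos (hG : 0 < G) (hb : 0 < b) (hab : b < β * a)
    (hQ : Q ∈ Set.Ioc 0 ((β * a - b) / (1 + β))) : 0 < eqPrice a b β G Q t :=
  div_pos (pow_pos hG t) (priceRecip_pos hb hab hQ)

lemma eqPrice_lt_mul_pow (ha : 0 < a) (hb : 0 < b) (hG : 0 < G) (hab : b < β * a)
    (hQ : Q ∈ Set.Ioc 0 ((β * a - b) / (1 + β))) : eqPrice a b β G Q t < a * G ^ t := by
  rw [eqPrice, div_lt_iff₀ (priceRecip_pos hb hab hQ), mul_right_comm]
  exact lt_mul_of_one_lt_left (pow_pos hG t) (one_lt_mul_priceRecip ha hb hab hQ)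

lemma eqPrice_lt_eqPrice (hb : 0 < b) (hG : 0 < G) (hab : b < β * a) (hQ : 0 < Q)
    (hQQ' : Q < Q') (hQ' : Q' ∈ Set.Ioc 0 ((β * a - b) / (1 + β))) :
    eqPrice a b β G Q t < eqPrice a b β G Q' t :=
  div_lt_div_of_pos_left (pow_pos hG t) (priceRecip_pos hb hab hQ')
    (priceRecip_lt_priceRecip hb hab hQ hQQ')

lemma eqPrice_succ_mul_le (hb : 0 < b) (hβ : 0 < β) (hG : 0 < G) (hab : b < β * a)
    (hQ : 0 < Q) (hQQ' : Q < Q') (hQ' : Q' ∈ Set.Ioc 0 ((β * a - b) / (1 + β))) :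
    eqPrice a b β G Q (t + 1) * eqPrice a b β G Q' t ≤
      eqPrice a b β G Q t * eqPrice a b β G Q' (t + 1) := by
  have hQ'' : Q ∈ Set.Ioc 0 ((β * a - b) / (1 + β)) := ⟨hQ, hQQ'.le.trans hQ'.2⟩
  unfold eqPrice
  rw [div_mul_div_comm, div_mul_div_comm, mul_comm (G ^ (t + 1))]
  refine div_le_div_of_nonneg_left (by positivity) ?_ ?_
  · exact mul_pos (priceRecip_pos hb hab hQ'') (priceRecip_pos hb hab hQ')
  · exact priceRecip_mul_succ_le hb hβ hab hQ hQQ'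

lemma eqPrice_foc (hb : 0 < b) (hab : b < β * a) (hQ : Q ∈ Set.Ioc 0 ((β * a - b) / (1 + β))) :
    β * eqPrice a b β G Q (t + 1) * (a * G ^ t - eqPrice a b β G Q t) =
      eqPrice a b β G Q t * (b * G ^ (t + 1) + eqPrice a b β G Q (t + 1)) := by
  have hx := (priceRecip_pos (t := t) hb hab hQ).ne'
  have hy := (priceRecip_pos (t := t + 1) hb hab hQ).ne'
  have hrec := priceRecip_succ (Q := Q) (t := t) hb.ne' (sub_pos.2 hab).ne'
  unfold eqPrice
  field_simp
  linear_combination (-(G ^ t * G ^ (t + 1))) * hrec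

end Equilibrium

theorem pareto_ranking_of_equilibria (a b β G : ℝ)
    (ha : 0 < a) (hb : 0 < b) (hβ : 0 < β) (hG : 0 < G) (hab : b < β * a)
    (P : ℝ → ℕ → ℝ)
    (hP : ∀ P₀ ∈ Set.Ioc (0 : ℝ) ((β * a - b) / (1 + β)), ∀ t : ℕ,
      P P₀ t = G ^ t /
        ((β * a / b) ^ t * (1 / P₀ - (1 + β) / (β * a - b)) + (1 + β) / (β * a - b)))
    (hPzero : ∀ t : ℕ, P 0 t = 0)
    (P₀ P₀' : ℝ) (h₁ : 0 ≤ P₀) (h₂ : P₀ < P₀') (h₃ : P₀' ≤ (β * a - b) / (1 + β)) :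
    b + P P₀ 0 < b + P P₀' 0 ∧
    ∀ t : ℕ,
      Real.log (a * G ^ t - P P₀ t) + β * Real.log (b * G ^ (t + 1) + P P₀ (t + 1)) <
      Real.log (a * G ^ t - P P₀' t) + β * Real.log (b * G ^ (t + 1) + P P₀' (t + 1)) := by
  have hQ' : P₀' ∈ Set.Ioc 0 ((β * a - b) / (1 + β)) := ⟨h₁.trans_lt h₂, h₃⟩
  have hP' : ∀ t, P P₀' t = eqPrice a b β G P₀' t := hP P₀' hQ'
  have hlower : ∀ t, 0 ≤ P P₀ t ∧ P P₀ t < P P₀' t ∧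
      P P₀ (t + 1) * P P₀' t ≤ P P₀ t * P P₀' (t + 1) := by
    intro t
    rcases h₁.eq_or_lt with rfl | hpos
    · simp [hPzero, hP', eqPrice_pos hG hb hab hQ']
    · have hQ : P₀ ∈ Set.Ioc 0 ((β * a - b) / (1 + β)) := ⟨hpos, h₂.le.trans h₃⟩
      simp only [hP', hP P₀ hQ]
      exact ⟨(eqPrice_pos hG hb hab hQ).le, eqPrice_lt_eqPrice hb hG hab hpos h₂ hQ',
        eqPrice_succ_mul_le hb hβ hG hab hpos h₂ hQ'⟩
  refine ⟨(add_lt_add_iff_left b).2 (hlower 0).2.1, fun t => ?_⟩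
  obtain ⟨-, hlt, hafford⟩ := hlower t
  have hA := eqPrice_lt_mul_pow (t := t) ha hb hG hab hQ'
  have hB : 0 < b * G ^ (t + 1) := by positivity
  simp only [hP'] at hlt hafford ⊢
  exact log_sub_add_mul_log_add_lt_of_affordable hβ (eqPrice_pos hG hb hab hQ') (hlt.trans hA) hA
    (by linarith [(hlower (t + 1)).1]) (by linarith [eqPrice_pos (t := t + 1) hG hb hab hQ'])
    hlt.ne hafford (eqPrice_foc hb hab hQ')
end

section
/- Let a, b, β, G, G_d, D_0 ∈ ℝ with a, b, β, G, G_d, D_0 > 0, βa > b, and bG/(βa) < G_d < G. Then there exists no sequence ξ : ℕ → ℝ such that for all t ∈ ℕ: ξ_t > 0, (ξ_{t+1} + (G_d/G)^{t+1}·D_0)·(βa − (1+β)·ξ_t) = b·ξ_t, and ξ_t → 0 as t → ∞. -/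
/-!
Write `q = G_d / G` and `u_t = ξ_t / q^t` for the price detrended at the dividend's rate. Since
`b / q < βa` and `ξ_t → 0`, the denominator `βa - (1 + β) ξ_t` eventually exceeds `b / q`, so the
equilibrium equation gives `ξ_{t+1} + q^{t+1} D₀ ≤ q ξ_t`, that is `u_{t+1} + D₀ ≤ u_t`. A sequence
losing at least `D₀ > 0` at every step eventually becomes negative, contradicting `ξ_t > 0`.
-/

section Archimedean

variable {α : Type*} [AddCommGroup α] [LinearOrder α] [IsOrderedAddMonoid α]

lemma add_nsmul_le_of_forall_add_le {u : ℕ → α} {D : α} (h : ∀ n, u (n + 1) + D ≤ u n) :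
    ∀ n, u n + n • D ≤ u 0
  | 0 => by simp
  | n + 1 => by
    calc u (n + 1) + (n + 1) • D = u (n + 1) + D + n • D := by rw [succ_nsmul']; abel
      _ ≤ u n + n • D := by gcongr; exact h n
      _ ≤ u 0 := add_nsmul_le_of_forall_add_le h n

lemma exists_neg_of_forall_add_le [Archimedean α] {u : ℕ → α} {D : α} (hD : 0 < D)
    (h : ∀ n, u (n + 1) + D ≤ u n) : ∃ n, u n < 0 := by
  obtain ⟨n, hn⟩ := Archimedean.arch (u 0) hD
  refine ⟨n + 1, (lt_add_of_pos_right _ hD).trans_le (le_of_add_le_add_right (a := n • D) ?_)⟩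
  calc u (n + 1) + D + n • D = u (n + 1) + (n + 1) • D := by rw [succ_nsmul']; abel
    _ ≤ u 0 := add_nsmul_le_of_forall_add_le h (n + 1)
    _ ≤ 0 + n • D := by rwa [zero_add]

end Archimedean

lemma add_le_mul_of_add_mul_eq {x x' c d b q : ℝ} (hq : 0 < q) (hb : 0 < b) (hd : b / q < d)
    (hx : 0 ≤ x) (h : (x' + c) * d = b * x) : x' + c ≤ q * x := by
  have hd₀ : 0 < d := (div_pos hb hq).trans hd
  have hbd : b ≤ q * d := by rw [div_lt_iff₀ hq] at hd; linarith
  refine le_of_mul_le_mul_right ?_ hd₀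
  calc (x' + c) * d = b * x := h
    _ ≤ q * d * x := by gcongr
    _ = q * x * d := by ring

lemma div_pow_succ_add_le_div_pow {x x' D q : ℝ} (hq : 0 < q) (t : ℕ)
    (h : x' + q ^ (t + 1) * D ≤ q * x) : x' / q ^ (t + 1) + D ≤ x / q ^ t := by
  calc x' / q ^ (t + 1) + D = (x' + q ^ (t + 1) * D) / q ^ (t + 1) := by field_simp
    _ ≤ q * x / q ^ (t + 1) := by gcongr
    _ = x / q ^ t := by rw [pow_succ]; field_simp

theorem no_path_to_fundamental_steady_state_general (a b β G Gd D₀ : ℝ)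
    (ha : 0 < a) (hb : 0 < b) (hβ : 0 < β) (hG : 0 < G) (hGd : 0 < Gd) (hD₀ : 0 < D₀)
    (hGd₁ : b * G / (β * a) < Gd) :
    ¬ ∃ ξ : ℕ → ℝ,
      (∀ t : ℕ, 0 < ξ t ∧
        (ξ (t + 1) + (Gd / G) ^ (t + 1) * D₀) * (β * a - (1 + β) * ξ t) = b * ξ t) ∧
      Filter.Tendsto ξ Filter.atTop (nhds 0) := by
  rintro ⟨ξ, hξ, hlim⟩
  set q := Gd / G
  have hq : 0 < q := div_pos hGd hG
  have hbq : b / q < β * a := by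
    rw [div_lt_iff₀ (mul_pos hβ ha)] at hGd₁
    rw [div_lt_iff₀ hq, ← mul_div_assoc, lt_div_iff₀ hG]
    linarith
  have hden : ∀ᶠ t in Filter.atTop, b / q < β * a - (1 + β) * ξ t := by
    have hlim' : Filter.Tendsto (fun t => (1 + β) * ξ t) Filter.atTop (nhds 0) := by
      simpa using hlim.const_mul (1 + β)
    filter_upwards [hlim'.eventually_lt_const (sub_pos.2 hbq)] with t ht
    linarith
  obtain ⟨T, hT⟩ := Filter.eventually_atTop.1 hden
  have hstep : ∀ n, ξ (T + n + 1) / q ^ (T + n + 1) + D₀ ≤ ξ (T + n) / q ^ (T + n) := fun n =>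
    div_pow_succ_add_le_div_pow hq _ <|
      add_le_mul_of_add_mul_eq hq hb (hT _ (Nat.le_add_right T n)) (hξ _).1.le (hξ _).2
  obtain ⟨n, hn⟩ := exists_neg_of_forall_add_le
    (u := fun n => ξ (T + n) / q ^ (T + n)) hD₀ hstep
  exact hn.not_gt (div_pos (hξ _).1 (pow_pos hq _))

theorem no_path_to_fundamental_steady_state (a b β G Gd D₀ : ℝ)
    (ha : 0 < a) (hb : 0 < b) (hβ : 0 < β) (hG : 0 < G) (hGd : 0 < Gd) (hD₀ : 0 < D₀)
    (hab : b < β * a) (hGd₁ : b * G / (β * a) < Gd) (hGd₂ : Gd < G) :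
    ¬ ∃ ξ : ℕ → ℝ,
      (∀ t : ℕ, 0 < ξ t ∧
        (ξ (t + 1) + (Gd / G) ^ (t + 1) * D₀) * (β * a - (1 + β) * ξ t) = b * ξ t) ∧
      Filter.Tendsto ξ Filter.atTop (nhds 0) :=
  no_path_to_fundamental_steady_state_general a b β G Gd D₀ ha hb hβ hG hGd hD₀ hGd₁
end

section
/- Let a, b, β, G, G_d, D_0 ∈ ℝ with a, b, β, G, G_d, D_0 > 0, βa > b, and bG/(βa) < G_d < G. Then there exists exactly one sequence ξ : ℕ → ℝ such that for all t ∈ ℕ: ξ_t > 0, (ξ_{t+1} + (G_d/G)^{t+1}·D_0)·(βa − (1+β)·ξ_t) = b·ξ_t, and ξ_t → (βa − b)/(1+β) as t → ∞. -/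
/-!
Solving the equilibrium condition for `ξ_t` gives the backward recursion
`ξ_t = g (ξ_{t+1} + (G_d/G)^{t+1} D₀)` with the Beverton–Holt map
`g u = βa u / (b + (1+β) u)`, whose positive fixed point is the bubbly steady state
`x* = (βa - b)/(1+β)`. Since `g'(x*) = b/(βa) < 1`, the map `g` is a contraction on a half-line
`[m, ∞)` with `0 < m < x*`, which it maps into `[m, βa/(1+β)]`.

Existence: the recursion is a contraction of the sequences with values in `[m, βa/(1+β)]` under
the sup metric. Its fixed point satisfies
`|ξ_t - x*| ≤ k (|ξ_{t+1} - x*| + (G_d/G)^{t+1} D₀)`, so it converges to `x*` geometrically.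

Uniqueness: two solutions converging to `x*` eventually lie in `[m, ∞)`, where the distance
between them is nondecreasing in `t`; as it tends to `0`, they agree from some date on, hence at
every date by the backward recursion.
-/

open Filter Topology Set Metric Function
open scoped NNReal BoundedContinuousFunction

section BackwardOrbit

variable {α : Type*}

theorem backward_orbit_eq_of_eventuallyEq {f : ℕ → α → α} {ξ η : ℕ → α}
    (hξ : ∀ t, ξ t = f t (ξ (t + 1))) (hη : ∀ t, η t = f t (η (t + 1)))
    (h : ξ =ᶠ[atTop] η) : ξ = η := by
  obtain ⟨T, hT⟩ := eventually_atTop.1 h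
  have key : ∀ j t, T ≤ t + j → ξ t = η t := by
    intro j
    induction j with
    | zero => exact hT
    | succ j ih => intro t ht; rw [hξ t, hη t, ih (t + 1) (by omega)]
  funext t
  exact key T t (by omega)

variable [MetricSpace α]

theorem exists_backward_orbit [CompleteSpace α] [BoundedSpace α] [Nonempty α]
    {f : ℕ → α → α} {K : ℝ≥0} (hK : K < 1) (hf : ∀ t, LipschitzWith K (f t)) :
    ∃ ξ : ℕ → α, ∀ t, ξ t = f t (ξ (t + 1)) := by
  let Φ : (ℕ →ᵇ α) → (ℕ →ᵇ α) := fun ξ =>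
    .mkOfDiscrete (fun t => f t (ξ (t + 1))) (diam (univ : Set α))
      fun _ _ => dist_le_diam_of_mem (Bornology.isBounded_univ.2 ‹_›) trivial trivial
  have hΦ : ContractingWith K Φ := by
    refine ⟨hK, LipschitzWith.of_dist_le_mul fun ξ η => ?_⟩
    refine (BoundedContinuousFunction.dist_le (by positivity)).2 fun t => ?_
    exact ((hf t).dist_le_mul _ _).trans
      (mul_le_mul_of_nonneg_left (BoundedContinuousFunction.dist_coe_le_dist _) K.2)
  have : Nonempty (ℕ →ᵇ α) := ⟨.const ℕ (Classical.arbitrary α)⟩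
  exact ⟨_, fun t =>
    (congrArg (· t) (ContractingWith.fixedPoint_isFixedPt (f := Φ) hΦ)).symm⟩

theorem exists_backward_orbit_mem {f : ℕ → α → α} {s : Set α} (hsc : IsComplete s)
    (hsb : Bornology.IsBounded s) (hsne : s.Nonempty) {K : ℝ≥0} (hK : K < 1)
    (hmaps : ∀ t, MapsTo (f t) s s) (hf : ∀ t, LipschitzOnWith K (f t) s) :
    ∃ ξ : ℕ → α, ∀ t, ξ t ∈ s ∧ ξ t = f t (ξ (t + 1)) := by
  have := hsc.completeSpace_coe
  have := boundedSpace_val_set_iff.2 hsb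
  have := hsne.to_subtype
  obtain ⟨ξ, hξ⟩ := exists_backward_orbit hK fun t => (hf t).mapsToRestrict (hmaps t)
  exact ⟨fun t => ξ t, fun t => ⟨(ξ t).2, congrArg Subtype.val (hξ t)⟩⟩

theorem backward_orbit_unique {f : ℕ → α → α} {s : Set α} {x : α}
    (hf : ∀ t, LipschitzOnWith 1 (f t) s) (hs : s ∈ 𝓝 x) {ξ η : ℕ → α}
    (hξ : ∀ t, ξ t = f t (ξ (t + 1))) (hη : ∀ t, η t = f t (η (t + 1)))
    (hξx : Tendsto ξ atTop (𝓝 x)) (hηx : Tendsto η atTop (𝓝 x)) : ξ = η := by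
  obtain ⟨T, hT⟩ := eventually_atTop.1 ((hξx.eventually_mem hs).and (hηx.eventually_mem hs))
  have hmono : Monotone fun n => dist (ξ (n + T)) (η (n + T)) := by
    refine monotone_nat_of_le_succ fun n => ?_
    have h := (hf (n + T)).dist_le_mul _ (hT (n + T + 1) (by omega)).1 _
      (hT (n + T + 1) (by omega)).2
    rwa [← hξ, ← hη, NNReal.coe_one, one_mul, add_right_comm] at h
  have hlim : Tendsto (fun n => dist (ξ (n + T)) (η (n + T))) atTop (𝓝 0) := by
    rw [← dist_self x]
    exact (hξx.dist hηx).comp (tendsto_add_atTop_nat T)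
  refine backward_orbit_eq_of_eventuallyEq hξ hη (eventually_atTop.2 ⟨T, fun t ht => ?_⟩)
  obtain ⟨n, rfl⟩ := Nat.exists_eq_add_of_le' ht
  exact dist_le_zero.1 (hmono.ge_of_tendsto hlim n)

end BackwardOrbit

theorem le_mul_pow_of_le_mul_succ {e : ℕ → ℝ} {k r C D S : ℝ} (hk₀ : 0 ≤ k) (hk₁ : k < 1)
    (hr : 0 ≤ r) (hS : 0 ≤ S) (hC : ∀ t, e t ≤ C)
    (hrec : ∀ t, e t ≤ k * (e (t + 1) + r ^ (t + 1) * D)) (hSD : k * r * (S + D) ≤ S)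
    (t : ℕ) :
    e t ≤ S * r ^ t := by
  have key : ∀ n t, e t ≤ k ^ n * C + S * r ^ t := by
    intro n
    induction n with
    | zero => intro t; simpa using (hC t).trans (le_add_of_nonneg_right (by positivity))
    | succ n ih =>
      intro t
      calc e t ≤ k * (e (t + 1) + r ^ (t + 1) * D) := hrec t
        _ ≤ k * (k ^ n * C + S * r ^ (t + 1) + r ^ (t + 1) * D) := by
            gcongr; exact ih (t + 1)
        _ = k ^ (n + 1) * C + k * r * (S + D) * r ^ t := by ring
        _ ≤ k ^ (n + 1) * C + S * r ^ t := by gcongr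
  have hlim : Tendsto (fun n => k ^ n * C + S * r ^ t) atTop (𝓝 (S * r ^ t)) := by
    simpa using ((tendsto_pow_atTop_nhds_zero_of_lt_one hk₀ hk₁).mul_const C).add_const _
  exact ge_of_tendsto' hlim (key · t)

theorem tendsto_zero_of_le_mul_succ {e : ℕ → ℝ} {k r C D : ℝ} (hk₀ : 0 ≤ k) (hk₁ : k < 1)
    (hr₀ : 0 ≤ r) (hr₁ : r < 1) (hD : 0 ≤ D) (he : ∀ t, 0 ≤ e t) (hC : ∀ t, e t ≤ C)
    (hrec : ∀ t, e t ≤ k * (e (t + 1) + r ^ (t + 1) * D)) : Tendsto e atTop (𝓝 0) := by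
  have hkr : k * r < 1 := by nlinarith
  have hSD : k * r * (k * r * D / (1 - k * r) + D) = k * r * D / (1 - k * r) := by
    field_simp [(sub_pos.2 hkr).ne']
    ring
  refine squeeze_zero he (le_mul_pow_of_le_mul_succ hk₀ hk₁ hr₀ (by
    have := sub_pos.2 hkr; positivity) hC hrec hSD.le) ?_
  simpa using (tendsto_pow_atTop_nhds_zero_of_lt_one hr₀ hr₁).const_mul _

-- The equilibrium condition `u * (A - B x) = b x` solved for `x`, where `u` is next period's
-- price plus dividend.
noncomputable def bevertonHolt (A b B u : ℝ) : ℝ := A * u / (b + B * u)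

section BevertonHolt

variable {A b B : ℝ}

theorem eq_bevertonHolt_iff {u x : ℝ} (hu : b + B * u ≠ 0) :
    x = bevertonHolt A b B u ↔ u * (A - B * x) = b * x := by
  rw [bevertonHolt, eq_div_iff hu]
  constructor <;> intro h <;> linarith

theorem isFixedPt_bevertonHolt (hA : A ≠ 0) (hB : B ≠ 0) :
    IsFixedPt (bevertonHolt A b B) ((A - b) / B) := by
  rw [IsFixedPt, bevertonHolt, show b + B * ((A - b) / B) = A by field_simp; ring]
  field_simp

theorem mapsTo_bevertonHolt {m : ℝ} (hb : 0 < b) (hB : 0 < B) (hm : 0 ≤ m)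
    (hmA : b + B * m ≤ A) : MapsTo (bevertonHolt A b B) (Ici m) (Icc m (A / B)) := by
  intro u (hu : m ≤ u)
  have hA : 0 ≤ A := by nlinarith [mul_nonneg hB.le hm]
  have hden : 0 < b + B * u := add_pos_of_pos_of_nonneg hb (mul_nonneg hB.le (hm.trans hu))
  constructor
  · rw [bevertonHolt, le_div_iff₀ hden]
    nlinarith [mul_le_mul_of_nonneg_right hmA (hm.trans hu), mul_le_mul_of_nonneg_left hu hb.le]
  · rw [bevertonHolt, div_le_div_iff₀ hden hB]
    nlinarith [mul_nonneg hA hb.le]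

theorem lipschitzOnWith_bevertonHolt {m : ℝ} (hA : 0 ≤ A) (hb : 0 ≤ b) (hB : 0 ≤ B)
    (hm : 0 < b + B * m) :
    LipschitzOnWith (A * b / (b + B * m) ^ 2).toNNReal (bevertonHolt A b B) (Ici m) := by
  refine LipschitzOnWith.of_dist_le_mul fun u (hu : m ≤ u) v (hv : m ≤ v) => ?_
  have hu' : b + B * m ≤ b + B * u := by gcongr
  have hv' : b + B * m ≤ b + B * v := by gcongr
  have hsub : bevertonHolt A b B u - bevertonHolt A b B v
      = A * b * (u - v) / ((b + B * u) * (b + B * v)) := by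
    rw [bevertonHolt, bevertonHolt, div_sub_div _ _ (hm.trans_le hu').ne' (hm.trans_le hv').ne']
    ring
  rw [Real.coe_toNNReal _ (by positivity), Real.dist_eq, Real.dist_eq, hsub, abs_div, abs_mul,
    abs_of_nonneg (mul_nonneg hA hb), abs_of_pos (mul_pos (hm.trans_le hu') (hm.trans_le hv'))]
  calc A * b * |u - v| / ((b + B * u) * (b + B * v))
      ≤ A * b * |u - v| / (b + B * m) ^ 2 := by
        gcongr
        rw [sq]
        exact mul_le_mul hu' hv' hm.le (hm.trans_le hu').le
    _ = A * b / (b + B * m) ^ 2 * |u - v| := by ring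

-- `g'((A - b) / B) = b / A < 1`. At half the fixed point, `b + B m = (A + b) / 2`, and AM-GM
-- gives `((A + b) / 2) ^ 2 > A b`.
theorem exists_lipschitzOnWith_bevertonHolt_lt_one (hb : 0 < b) (hbA : b < A) (hB : 0 < B) :
    ∃ m, 0 < m ∧ m < (A - b) / B ∧
      ∃ K : ℝ≥0, K < 1 ∧ LipschitzOnWith K (bevertonHolt A b B) (Ici m) := by
  have hx : 0 < (A - b) / B := div_pos (by linarith) hB
  have hden : b + B * ((A - b) / B / 2) = (A + b) / 2 := by field_simp; ring
  refine ⟨(A - b) / B / 2, half_pos hx, by linarith, _, ?_,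
    lipschitzOnWith_bevertonHolt (by linarith) hb.le hB.le (by rw [hden]; linarith)⟩
  rw [Real.toNNReal_lt_one, hden, div_lt_one (pow_pos (by linarith) 2)]
  nlinarith [sq_pos_of_pos (sub_pos.2 hbA)]

end BevertonHolt

-- `r ^ (t + 1) * D` is the detrended dividend `ξ₂` at date `t + 1`.
noncomputable def backwardStep (A b B r D : ℝ) (t : ℕ) (u : ℝ) : ℝ :=
  bevertonHolt A b B (u + r ^ (t + 1) * D)

section BackwardStep

variable {A b B r D m : ℝ}

theorem mapsTo_add_Ici {c : ℝ} (hc : 0 ≤ c) : MapsTo (· + c) (Ici m) (Ici m) :=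
  fun _ hu => le_add_of_le_of_nonneg hu hc

theorem lipschitzOnWith_backwardStep (hr : 0 ≤ r) (hD : 0 ≤ D) {K : ℝ≥0}
    (hlip : LipschitzOnWith K (bevertonHolt A b B) (Ici m)) (t : ℕ) :
    LipschitzOnWith K (backwardStep A b B r D t) (Ici m) := by
  have h := hlip.comp (isometry_add_right _).lipschitz.lipschitzOnWith
    (mapsTo_add_Ici (by positivity : 0 ≤ r ^ (t + 1) * D))
  rwa [mul_one] at h

theorem exists_backwardStep_orbit_tendsto (hb : 0 < b) (hB : 0 < B) (hr₀ : 0 ≤ r)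
    (hr₁ : r < 1) (hD : 0 ≤ D) (hm : 0 ≤ m) (hmx : m ≤ (A - b) / B) {K : ℝ≥0} (hK : K < 1)
    (hlip : LipschitzOnWith K (bevertonHolt A b B) (Ici m)) :
    ∃ ξ : ℕ → ℝ, (∀ t, m ≤ ξ t) ∧ (∀ t, ξ t = backwardStep A b B r D t (ξ (t + 1))) ∧
      Tendsto ξ atTop (𝓝 ((A - b) / B)) := by
  have hmA : b + B * m ≤ A := by rw [le_div_iff₀ hB] at hmx; linarith
  have hA : 0 < A := by nlinarith
  have hx : (A - b) / B ∈ Icc m (A / B) := ⟨hmx, by gcongr; linarith⟩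
  have hmaps : ∀ t, MapsTo (backwardStep A b B r D t) (Ici m) (Icc m (A / B)) := fun t =>
    (mapsTo_bevertonHolt hb hB hm hmA).comp (mapsTo_add_Ici (by positivity))
  obtain ⟨ξ, hξ⟩ := exists_backward_orbit_mem isClosed_Icc.isComplete
    (isBounded_Icc m (A / B)) ⟨_, hx⟩ hK
    (fun t => (hmaps t).mono_left Icc_subset_Ici_self)
    (fun t => (lipschitzOnWith_backwardStep hr₀ hD hlip t).mono Icc_subset_Ici_self)
  refine ⟨ξ, fun t => (hξ t).1.1, fun t => (hξ t).2, tendsto_iff_dist_tendsto_zero.2 ?_⟩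
  refine tendsto_zero_of_le_mul_succ K.2 hK hr₀ hr₁ hD (fun _ => dist_nonneg)
    (fun t => Real.dist_le_of_mem_Icc (hξ t).1 hx) fun t => ?_
  have hshift : m ≤ ξ (t + 1) + r ^ (t + 1) * D :=
    mapsTo_add_Ici (by positivity) (hξ (t + 1)).1.1
  calc dist (ξ t) ((A - b) / B)
      = dist (bevertonHolt A b B (ξ (t + 1) + r ^ (t + 1) * D))
          (bevertonHolt A b B ((A - b) / B)) := by
        rw [(hξ t).2, isFixedPt_bevertonHolt hA.ne' hB.ne']; rfl
    _ ≤ K * dist (ξ (t + 1) + r ^ (t + 1) * D) ((A - b) / B) := hlip.dist_le_mul _ hshift _ hmx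
    _ ≤ K * (dist (ξ (t + 1)) ((A - b) / B) + r ^ (t + 1) * D) := by
        gcongr
        calc _ ≤ dist (ξ (t + 1) + r ^ (t + 1) * D) (ξ (t + 1))
              + dist (ξ (t + 1)) ((A - b) / B) := dist_triangle _ _ _
          _ = _ := by rw [dist_self_add_left, Real.norm_of_nonneg (by positivity), add_comm]

end BackwardStep

theorem unique_path_to_bubbly_steady_state_general (a b β G Gd D₀ : ℝ)
    (hb : 0 < b) (hβ : 0 < β) (hG : 0 < G) (hGd : 0 < Gd) (hD₀ : 0 < D₀)
    (hab : b < β * a) (hGd₂ : Gd < G) :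
    ∃! ξ : ℕ → ℝ,
      (∀ t : ℕ, 0 < ξ t ∧
        (ξ (t + 1) + (Gd / G) ^ (t + 1) * D₀) * (β * a - (1 + β) * ξ t) = b * ξ t) ∧
      Filter.Tendsto ξ Filter.atTop (nhds ((β * a - b) / (1 + β))) := by
  have hB : 0 < 1 + β := by linarith
  have hr₀ : 0 ≤ Gd / G := by positivity
  have hr₁ : Gd / G < 1 := (div_lt_one hG).2 hGd₂
  have hsol : ∀ ξ : ℕ → ℝ, (∀ t, 0 < ξ t) → ∀ t,
      ((ξ (t + 1) + (Gd / G) ^ (t + 1) * D₀) * (β * a - (1 + β) * ξ t) = b * ξ t ↔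
        ξ t = backwardStep (β * a) b (1 + β) (Gd / G) D₀ t (ξ (t + 1))) := fun ξ hξ t =>
    (eq_bevertonHolt_iff (add_pos hb (mul_pos hB (add_pos (hξ (t + 1)) (by positivity)))).ne').symm
  obtain ⟨m, hm, hmx, K, hK, hlip⟩ := exists_lipschitzOnWith_bevertonHolt_lt_one hb hab hB
  obtain ⟨ξ, hξm, hξ, hξx⟩ :=
    exists_backwardStep_orbit_tendsto hb hB hr₀ hr₁ hD₀.le hm.le hmx.le hK hlip
  have hξpos : ∀ t, 0 < ξ t := fun t => hm.trans_le (hξm t)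
  refine ⟨ξ, ⟨fun t => ⟨hξpos t, (hsol ξ hξpos t).2 (hξ t)⟩, hξx⟩, ?_⟩
  rintro η ⟨hη, hηx⟩
  exact backward_orbit_unique
    (fun t => (lipschitzOnWith_backwardStep hr₀ hD₀.le hlip t).weaken hK.le)
    (Ici_mem_nhds hmx) (fun t => (hsol η (fun t => (hη t).1) t).1 (hη t).2) hξ hηx hξx

theorem unique_path_to_bubbly_steady_state (a b β G Gd D₀ : ℝ)
    (ha : 0 < a) (hb : 0 < b) (hβ : 0 < β) (hG : 0 < G) (hGd : 0 < Gd) (hD₀ : 0 < D₀)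
    (hab : b < β * a) (hGd₁ : b * G / (β * a) < Gd) (hGd₂ : Gd < G) :
    ∃! ξ : ℕ → ℝ,
      (∀ t : ℕ, 0 < ξ t ∧
        (ξ (t + 1) + (Gd / G) ^ (t + 1) * D₀) * (β * a - (1 + β) * ξ t) = b * ξ t) ∧
      Filter.Tendsto ξ Filter.atTop (nhds ((β * a - b) / (1 + β))) :=
  unique_path_to_bubbly_steady_state_general a b β G Gd D₀ hb hβ hG hGd hD₀ hab hGd₂
end

section
/- Let G, ω, c, σ, d ∈ ℝ with G > 0, ω > 0, 0 < c < ω, σ > 0, and d < 0. Then G − (σ − 1)·d / ( −σ·G/c − σ·G/(ω − c) ) > 0 if and only if 1/σ > 1 + (G²/d)·ω/(c·(ω − c)). -/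
/-! Both conditions say that `N = σ G² ω + (σ - 1) d c (ω - c)` is positive: clearing
denominators turns the left side into `N / (σ G ω)` and `1/σ` minus the right side into
`N / (-σ d c (ω - c))`, and both denominators are positive since `d < 0 < c < ω`. -/

section Identities

variable {K : Type*} [Field K] {G ω c σ d : K}

theorem sub_div_neg_sub_div_eq (hG : G ≠ 0) (hω : ω ≠ 0) (hc : c ≠ 0) (hcω : ω - c ≠ 0)
    (hσ : σ ≠ 0) :
    G - (σ - 1) * d / (-(σ * G / c) - σ * G / (ω - c)) =
      (σ * G ^ 2 * ω + (σ - 1) * d * (c * (ω - c))) / (σ * G * ω) := by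
  have hsum : -(σ * G / c) - σ * G / (ω - c) = -(σ * G * ω) / (c * (ω - c)) := by
    field_simp
    ring
  rw [hsum]
  field_simp
  ring

theorem one_div_sub_one_add_div_eq (hd : d ≠ 0) (hc : c ≠ 0) (hcω : ω - c ≠ 0) (hσ : σ ≠ 0) :
    1 / σ - (1 + (G ^ 2 / d) * ω / (c * (ω - c))) =
      (σ * G ^ 2 * ω + (σ - 1) * d * (c * (ω - c))) / (-(σ * d * (c * (ω - c)))) := by
  field_simp
  ring

end Identities

theorem eis_condition_equivalence_general (G ω c σ d : ℝ)
    (hG : 0 < G) (hc : 0 < c) (hcω : c < ω) (hσ : 0 < σ) (hd : d < 0) :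
    0 < G - (σ - 1) * d / (-(σ * G / c) - σ * G / (ω - c)) ↔
    1 / σ > 1 + (G ^ 2 / d) * ω / (c * (ω - c)) := by
  have hω : 0 < ω := hc.trans hcω
  have hcω' : 0 < ω - c := sub_pos.mpr hcω
  have hden : 0 < -(σ * d * (c * (ω - c))) := by
    have := mul_pos (mul_pos hσ (neg_pos.mpr hd)) (mul_pos hc hcω')
    linarith
  rw [sub_div_neg_sub_div_eq hG.ne' hω.ne' hc.ne' hcω'.ne' hσ.ne',
    div_pos_iff_of_pos_right (by positivity), gt_iff_lt, ← sub_pos (a := 1 / σ),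
    one_div_sub_one_add_div_eq hd.ne hc.ne' hcω'.ne' hσ.ne', div_pos_iff_of_pos_right hden]

theorem eis_condition_equivalence (G ω c σ d : ℝ)
    (hG : 0 < G) (hω : 0 < ω) (hc : 0 < c) (hcω : c < ω) (hσ : 0 < σ) (hd : d < 0) :
    0 < G - (σ - 1) * d / (-(σ * G / c) - σ * G / (ω - c)) ↔
    1 / σ > 1 + (G ^ 2 / d) * ω / (c * (ω - c)) :=
  eis_condition_equivalence_general G ω c σ d hG hc hcω hσ hd
end

section
/- Let I ⊆ ℝ be an open interval, r ∈ ℝ with r > 0, and let M : ℝ × ℝ → ℝ be continuously differentiable, ω : I → ℝ and c : I → ℝ be differentiable, with ω'(k) > 0 for all k ∈ I. Suppose that for all k ∈ I, M(c(k), r·(ω(k) − c(k))) = r, and that at every point (x, y) = (c(k), r(ω(k) − c(k))) with k ∈ I, the partial derivatives satisfy ∂₁M(x,y) < 0 and ∂₂M(x,y) > 0. Then for every k ∈ I, ω'(k) − c'(k) = ω'(k)·∂₁M / (∂₁M − r·∂₂M) > 0, where the partial derivatives of M are evaluated at (c(k), r(ω(k) − c(k))). -/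
/-! Differentiating the first-order condition `M (c k, r (ω k - c k)) = r` in `k` gives
`c' M₁ + r (ω' - c') M₂ = 0`, i.e. `(ω' - c') (M₁ - r M₂) = ω' M₁`; both `ω' M₁` and
`M₁ - r M₂` are negative. -/

open Filter Topology

theorem HasFDerivAt.apply_eq_zero_of_comp_eventuallyEq_const {𝕜 F G : Type*}
    [NontriviallyNormedField 𝕜] [NormedAddCommGroup F] [NormedSpace 𝕜 F]
    [NormedAddCommGroup G] [NormedSpace 𝕜 G] {M : F → G} {L : F →L[𝕜] G} {γ : 𝕜 → F}
    {v : F} {k : 𝕜} {m : G} (hM : HasFDerivAt M L (γ k)) (hγ : HasDerivAt γ v k)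
    (hconst : (fun t => M (γ t)) =ᶠ[𝓝 k] fun _ => m) : L v = 0 :=
  (hM.comp_hasDerivAt k hγ).unique ((hasDerivAt_const k m).congr_of_eventuallyEq hconst)

theorem ContinuousLinearMap.apply_prod_eq_smul_add_smul {𝕜 G : Type*} [NontriviallyNormedField 𝕜]
    [NormedAddCommGroup G] [NormedSpace 𝕜 G] (L : 𝕜 × 𝕜 →L[𝕜] G) (x y : 𝕜) :
    L (x, y) = x • L (1, 0) + y • L (0, 1) := by
  rw [← map_smul, ← map_smul, ← map_add]
  simp

theorem sub_eq_mul_div_of_mul_add_mul_eq_zero {a b r w c : ℝ} (h : c * a + r * (w - c) * b = 0)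
    (hden : a - r * b ≠ 0) : w - c = w * a / (a - r * b) := by
  rw [eq_div_iff hden]
  linarith

theorem p_positive_step2_general (I : Set ℝ) (hIopen : IsOpen I)
    (r : ℝ) (hr : 0 < r)
    (M : ℝ × ℝ → ℝ) (hM : ContDiff ℝ 1 M)
    (ω c : ℝ → ℝ)
    (hω : ∀ k ∈ I, DifferentiableAt ℝ ω k)
    (hc : ∀ k ∈ I, DifferentiableAt ℝ c k)
    (hω' : ∀ k ∈ I, 0 < deriv ω k)
    (hfoc : ∀ k ∈ I, M (c k, r * (ω k - c k)) = r)
    (hM1 : ∀ k ∈ I, fderiv ℝ M (c k, r * (ω k - c k)) (1, 0) < 0)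
    (hM2 : ∀ k ∈ I, 0 < fderiv ℝ M (c k, r * (ω k - c k)) (0, 1)) :
    ∀ k ∈ I,
      deriv ω k - deriv c k =
        deriv ω k * fderiv ℝ M (c k, r * (ω k - c k)) (1, 0) /
          (fderiv ℝ M (c k, r * (ω k - c k)) (1, 0) -
            r * fderiv ℝ M (c k, r * (ω k - c k)) (0, 1)) ∧
      0 < deriv ω k - deriv c k := by
  intro k hk
  have hγ : HasDerivAt (fun t => (c t, r * (ω t - c t)))
      (deriv c k, r * (deriv ω k - deriv c k)) k :=
    (hc k hk).hasDerivAt.prodMk (((hω k hk).hasDerivAt.sub (hc k hk).hasDerivAt).const_mul r)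
  have hfoc_diff := ((hM.differentiable one_ne_zero) _).hasFDerivAt
    |>.apply_eq_zero_of_comp_eventuallyEq_const hγ
      (eventuallyEq_of_mem (hIopen.mem_nhds hk) hfoc)
  rw [ContinuousLinearMap.apply_prod_eq_smul_add_smul, smul_eq_mul, smul_eq_mul] at hfoc_diff
  have hden : fderiv ℝ M (c k, r * (ω k - c k)) (1, 0) -
      r * fderiv ℝ M (c k, r * (ω k - c k)) (0, 1) < 0 := by
    nlinarith [hM1 k hk, hM2 k hk]
  have hp := sub_eq_mul_div_of_mul_add_mul_eq_zero hfoc_diff hden.ne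
  refine ⟨hp, ?_⟩
  rw [hp]
  exact div_pos_of_neg_of_neg (mul_neg_of_pos_of_neg (hω' k hk) (hM1 k hk)) hden

theorem p_positive_step2 (I : Set ℝ) (hIopen : IsOpen I) (hIconv : Convex ℝ I)
    (r : ℝ) (hr : 0 < r)
    (M : ℝ × ℝ → ℝ) (hM : ContDiff ℝ 1 M)
    (ω c : ℝ → ℝ)
    (hω : ∀ k ∈ I, DifferentiableAt ℝ ω k)
    (hc : ∀ k ∈ I, DifferentiableAt ℝ c k)
    (hω' : ∀ k ∈ I, 0 < deriv ω k)
    (hfoc : ∀ k ∈ I, M (c k, r * (ω k - c k)) = r)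
    (hM1 : ∀ k ∈ I, fderiv ℝ M (c k, r * (ω k - c k)) (1, 0) < 0)
    (hM2 : ∀ k ∈ I, 0 < fderiv ℝ M (c k, r * (ω k - c k)) (0, 1)) :
    ∀ k ∈ I,
      deriv ω k - deriv c k =
        deriv ω k * fderiv ℝ M (c k, r * (ω k - c k)) (1, 0) /
          (fderiv ℝ M (c k, r * (ω k - c k)) (1, 0) -
            r * fderiv ℝ M (c k, r * (ω k - c k)) (0, 1)) ∧
      0 < deriv ω k - deriv c k :=
  p_positive_step2_general I hIopen r hr M hM ω c hω hc hω' hfoc hM1 hM2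
end

section
/- Let β ∈ (0, 1), δ ∈ [0, 1], G > 0, φ ∈ (0, 1), and y > 0. Suppose f is twice differentiable at y with f(y) > 0, f'(y) > 0, f''(y) < 0, ω := f(y) − y·f'(y) > 0, and f'(y) + 1 − δ = ((1 − β + φβ)/(φβ))·G. Define ε > 0 by 1/ε = −y·f(y)·f''(y)/(f'(y)·(f(y) − y·f'(y))). Then y·f''(y) > −2G·(1 − β + φβ)/(φβ) if and only if ε > (1/2)·(1 − (φβ/(1 − β + φβ))·((1 − δ)/G))·(1 + y·f'(y)/ω)^{−1}. -/
/-!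
At the bubbly steady state the gross return `R := f' + 1 - δ` equals `((1 - β + φβ)/(φβ)) G`,
so the eigenvalue condition reads `-y f'' < 2R`. On the other side, `1 - (1 - δ)/R = f'/R` and
`(1 + y f'/ω)⁻¹ = ω/f`, so the elasticity threshold is `f' ω / (2 R f)`, while inverting the
definition of `ε` gives `ε = f' ω / (-y f f'')`. Comparing two fractions with the same positive
numerator `f' ω` compares their denominators `-y f f''` and `2 R f`, i.e. `-y f''` and `2R`.
-/

theorem one_sub_inv_mul_div_eq_div {c G P δ : ℝ} (hss : P + 1 - δ = c * G)
    (hR : P + 1 - δ ≠ 0) : 1 - c⁻¹ * ((1 - δ) / G) = P / (P + 1 - δ) := by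
  rw [inv_mul_eq_div, div_div, mul_comm G, ← hss]
  field_simp
  ring

theorem inv_one_add_div {a ω : ℝ} (hω : ω ≠ 0) : (1 + a / ω)⁻¹ = ω / (ω + a) := by
  rw [one_add_div hω, inv_div]

theorem neg_two_mul_lt_iff_div_lt_of_one_div_eq {y A P S R ω ε : ℝ} (hA : 0 < A) (hP : 0 < P) (hω : 0 < ω)
    (hR : 0 < R) (hε : 0 < ε) (hεdef : 1 / ε = -(y * A * S) / (P * ω)) :
    -(2 * R) < y * S ↔ P * ω / (2 * R * A) < ε := by
  have hPω : 0 < P * ω := mul_pos hP hω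
  have hK : 0 < -(y * A * S) := by
    rw [← div_pos_iff_of_pos_right hPω, ← hεdef]
    exact one_div_pos.mpr hε
  have hεeq : ε = P * ω / -(y * A * S) := by rw [← one_div_one_div ε, hεdef, one_div_div]
  rw [hεeq, div_lt_div_iff_of_pos_left hPω (by positivity) hK,
    show -(y * A * S) = A * -(y * S) by ring, show 2 * R * A = A * (2 * R) by ring,
    mul_lt_mul_iff_right₀ hA, neg_lt]

theorem eigenvalue_elasticity_equivalence_general (β δ G φ y : ℝ)
    (hδ : δ ∈ Set.Icc (0 : ℝ) 1)
    (f : ℝ → ℝ)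
    (hfy : 0 < f y) (hf'y : 0 < deriv f y)
    (ω : ℝ) (hω : ω = f y - y * deriv f y) (hωpos : 0 < ω)
    (hss : deriv f y + 1 - δ = ((1 - β + φ * β) / (φ * β)) * G)
    (ε : ℝ) (hε : 0 < ε)
    (hεdef : 1 / ε =
      -(y * f y * deriv (deriv f) y) / (deriv f y * (f y - y * deriv f y))) :
    y * deriv (deriv f) y > -(2 * G * (1 - β + φ * β) / (φ * β)) ↔
    ε > (1 / 2) * (1 - (φ * β / (1 - β + φ * β)) * ((1 - δ) / G)) *
      (1 + y * deriv f y / ω)⁻¹ := by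
  have hR : 0 < deriv f y + 1 - δ := by linarith [hδ.2]
  have hf : ω + y * deriv f y = f y := by rw [hω]; ring
  have hthreshold : (1 / 2) * (1 - (φ * β / (1 - β + φ * β)) * ((1 - δ) / G)) *
      (1 + y * deriv f y / ω)⁻¹ = deriv f y * ω / (2 * (deriv f y + 1 - δ) * f y) := by
    rw [← inv_div (1 - β + φ * β), one_sub_inv_mul_div_eq_div hss hR.ne', inv_one_add_div hωpos.ne', hf]
    field_simp
  have hcoef : -(2 * G * (1 - β + φ * β) / (φ * β)) = -(2 * (deriv f y + 1 - δ)) := by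
    rw [hss]; ring
  rw [gt_iff_lt, gt_iff_lt, hthreshold, hcoef]
  rw [← hω] at hεdef
  exact neg_two_mul_lt_iff_div_lt_of_one_div_eq hfy hf'y hωpos hR hε hεdef

theorem eigenvalue_elasticity_equivalence (β δ G φ y : ℝ)
    (hβ : β ∈ Set.Ioo (0 : ℝ) 1) (hδ : δ ∈ Set.Icc (0 : ℝ) 1) (hG : 0 < G)
    (hφ : φ ∈ Set.Ioo (0 : ℝ) 1) (hy : 0 < y)
    (f : ℝ → ℝ) (hf : DifferentiableAt ℝ f y) (hf' : DifferentiableAt ℝ (deriv f) y)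
    (hfy : 0 < f y) (hf'y : 0 < deriv f y) (hf''y : deriv (deriv f) y < 0)
    (ω : ℝ) (hω : ω = f y - y * deriv f y) (hωpos : 0 < ω)
    (hss : deriv f y + 1 - δ = ((1 - β + φ * β) / (φ * β)) * G)
    (ε : ℝ) (hε : 0 < ε)
    (hεdef : 1 / ε =
      -(y * f y * deriv (deriv f) y) / (deriv f y * (f y - y * deriv f y))) :
    y * deriv (deriv f) y > -(2 * G * (1 - β + φ * β) / (φ * β)) ↔
    ε > (1 / 2) * (1 - (φ * β / (1 - β + φ * β)) * ((1 - δ) / G)) *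
      (1 + y * deriv f y / ω)⁻¹ :=
  eigenvalue_elasticity_equivalence_general β δ G φ y hδ f hfy hf'y ω hω hωpos hss ε hε hεdef
end

section
/- Let β ∈ (0, 1), δ ∈ [0, 1], G > 1, φ ∈ (0, 1). Let f : (0, ∞) → ℝ be twice continuously differentiable, and let y_b > 0 satisfy f'(y_b) + 1 − δ = ((1 − β + φβ)/(φβ))·G, f''(y_b) < 0, and y_b·f''(y_b) > −2G·(1 − β + φβ)/(φβ). Then there exists ε > 0 such that for all y₀ > 0 and D ≥ 0 with |y₀ − y_b| < ε and D < ε, the sequence (y_t)_{t≥0} defined by y_0 = y₀ and y_{t+1} = (1/G)·(φβ/(1 − β + φβ))·( y_t·(f'(y_t) + 1 − δ) + D·G^{−t} ) is well defined (y_t > 0 for all t) and converges to y_b as t → ∞. -/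
/-!
With `k = φβ / (G (1 - β + φβ))` and `F z = k z (f' z + 1 - δ)` the recursion reads
`y (t + 1) = F (y t) + k D G⁻ᵗ`. The steady-state condition makes `y_b` a fixed point of `F`, and
`F' y_b = 1 + k y_b f'' y_b` lies in `(-1, 1)` because `f'' y_b < 0` and by the eigenvalue
condition. So `F` is a `λ`-contraction towards `y_b` on a small ball, `λ < 1`. Perturbing a
contraction by geometrically decaying errors keeps orbits starting near the fixed point inside the
ball (which lies in `(0, ∞)`), and their distance to it decays like `(a + t c) ρᵗ`,
`ρ = max λ G⁻¹`.
-/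

open Filter Metric Topology NNReal

theorem le_add_mul_mul_pow_of_le_mul_add_pow {a : ℕ → ℝ} {lam ρ c : ℝ} (hρ : 0 ≤ ρ)
    (hlam : lam ≤ ρ) (ha : ∀ t, 0 ≤ a t) (h : ∀ t, a (t + 1) ≤ lam * a t + c * ρ ^ (t + 1)) :
    ∀ t : ℕ, a t ≤ (a 0 + t * c) * ρ ^ t
  | 0 => by simp
  | t + 1 => by
    have ih := le_add_mul_mul_pow_of_le_mul_add_pow hρ hlam ha h t
    calc a (t + 1) ≤ ρ * a t + c * ρ ^ (t + 1) := by
          linarith [h t, mul_le_mul_of_nonneg_right hlam (ha t)]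
      _ ≤ ρ * ((a 0 + t * c) * ρ ^ t) + c * ρ ^ (t + 1) := by gcongr
      _ = (a 0 + ↑(t + 1) * c) * ρ ^ (t + 1) := by push_cast; ring

theorem tendsto_zero_of_le_mul_add_pow {a : ℕ → ℝ} {lam ρ c : ℝ} (hρ₀ : 0 ≤ ρ) (hρ₁ : ρ < 1)
    (hlam : lam ≤ ρ) (ha : ∀ t, 0 ≤ a t) (h : ∀ t, a (t + 1) ≤ lam * a t + c * ρ ^ (t + 1)) :
    Tendsto a atTop (𝓝 0) := by
  have hgeom : Tendsto (fun t : ℕ => a 0 * ρ ^ t + c * (t * ρ ^ t)) atTop (𝓝 0) := by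
    simpa using ((tendsto_pow_atTop_nhds_zero_of_lt_one hρ₀ hρ₁).const_mul (a 0)).add
      ((tendsto_self_mul_const_pow_of_lt_one hρ₀ hρ₁).const_mul c)
  refine squeeze_zero ha (fun t => ?_) hgeom
  linarith [le_add_mul_mul_pow_of_le_mul_add_pow hρ₀ hlam ha h t]

section PerturbedContraction

variable {X : Type*} [PseudoMetricSpace X] {F : X → X} {x : X} {y : ℕ → X} {r c ρ : ℝ}
  {lam : ℝ≥0}

theorem dist_le_of_perturbed_contraction
    (hF : ∀ z ∈ closedBall x r, dist (F z) x ≤ lam * dist z x)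
    (hy : ∀ t, dist (y (t + 1)) (F (y t)) ≤ c * ρ ^ (t + 1)) (hρ₀ : 0 ≤ ρ) (hρ₁ : ρ ≤ 1)
    (hc₀ : 0 ≤ c) (hc : c ≤ (1 - lam) * r) (hy₀ : dist (y 0) x ≤ r) :
    ∀ t, dist (y t) x ≤ r
  | 0 => hy₀
  | t + 1 => by
    have ih := dist_le_of_perturbed_contraction hF hy hρ₀ hρ₁ hc₀ hc hy₀ t
    calc dist (y (t + 1)) x ≤ dist (y (t + 1)) (F (y t)) + dist (F (y t)) x := dist_triangle ..
      _ ≤ c * 1 + lam * r := by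
          gcongr
          · exact (hy t).trans (by gcongr; exact pow_le_one₀ hρ₀ hρ₁)
          · exact (hF _ ih).trans (by gcongr)
      _ ≤ r := by linarith

theorem tendsto_of_perturbed_contraction
    (hF : ∀ z ∈ closedBall x r, dist (F z) x ≤ lam * dist z x)
    (hy : ∀ t, dist (y (t + 1)) (F (y t)) ≤ c * ρ ^ (t + 1)) (hρ₀ : 0 ≤ ρ) (hρ₁ : ρ < 1)
    (hlam : lam ≤ ρ) (hc₀ : 0 ≤ c) (hc : c ≤ (1 - lam) * r) (hy₀ : dist (y 0) x ≤ r) :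
    Tendsto y atTop (𝓝 x) := by
  have hball := dist_le_of_perturbed_contraction hF hy hρ₀ hρ₁.le hc₀ hc hy₀
  refine tendsto_iff_dist_tendsto_zero.2 <|
    tendsto_zero_of_le_mul_add_pow (c := c) hρ₀ hρ₁ hlam (fun t => dist_nonneg) fun t => ?_
  calc dist (y (t + 1)) x ≤ dist (y (t + 1)) (F (y t)) + dist (F (y t)) x := dist_triangle ..
    _ ≤ c * ρ ^ (t + 1) + lam * dist (y t) x := add_le_add (hy t) (hF _ (hball t))
    _ = lam * dist (y t) x + c * ρ ^ (t + 1) := add_comm ..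

end PerturbedContraction

theorem HasStrictDerivAt.eventually_contraction_on_closedBall {F : ℝ → ℝ} {F' x : ℝ}
    (hF : HasStrictDerivAt F F' x) (h : |F'| < 1) :
    ∃ lam : ℝ≥0, lam < 1 ∧
      ∀ᶠ r in 𝓝 0, ∀ z ∈ closedBall x r, dist (F z) (F x) ≤ lam * dist z x := by
  obtain ⟨lam, hF'lam, hlam⟩ := exists_between (show ‖F'‖₊ < 1 from h)
  obtain ⟨s, hs, hlip⟩ :=
    hF.hasStrictFDerivAt.exists_lipschitzOnWith_of_nnnorm_lt lam (by simpa using hF'lam)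
  obtain ⟨ε, hε, hballs⟩ := Metric.mem_nhds_iff.1 hs
  refine ⟨lam, hlam, (eventually_lt_nhds hε).mono fun r hr z hz => ?_⟩
  exact hlip.dist_le_mul z (hballs (closedBall_subset_ball hr hz)) x (hballs (mem_ball_self hε))

theorem ContDiffAt.hasStrictDerivAt_mul_deriv_add {f : ℝ → ℝ} {x : ℝ} (hf : ContDiffAt ℝ 2 f x)
    (a : ℝ) :
    HasStrictDerivAt (fun z => z * (deriv f z + a)) (deriv f x + a + x * deriv (deriv f) x) x := by
  have hf' : HasStrictDerivAt (deriv f) (deriv (deriv f) x) x :=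
    (hf.derivWithin (m := 1) le_rfl).hasStrictDerivAt one_ne_zero
  exact ((hasStrictDerivAt_id x).mul (hf'.add_const a)).congr_deriv (by simp)

theorem exists_contraction_of_fixed_point_of_deriv_deriv_neg {f : ℝ → ℝ} {k c x : ℝ}
    (hf : ContDiffAt ℝ 2 f x) (hx : 0 < x) (hk : 0 < k) (hfix : k * (deriv f x + c) = 1)
    (hf'' : deriv (deriv f) x < 0) (heig : -2 < k * (x * deriv (deriv f) x)) :
    ∃ lam : ℝ≥0, lam < 1 ∧ ∃ r ∈ Set.Ioo 0 x,
      ∀ z ∈ closedBall x r, dist (k * (z * (deriv f z + c))) x ≤ lam * dist z x := by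
  set F : ℝ → ℝ := fun z => k * (z * (deriv f z + c))
  have hFx : F x = x := by linear_combination x * hfix
  have hF' : HasStrictDerivAt F (1 + k * (x * deriv (deriv f) x)) x :=
    ((hf.hasStrictDerivAt_mul_deriv_add c).const_mul k).congr_deriv (by linear_combination hfix)
  have hrate : |1 + k * (x * deriv (deriv f) x)| < 1 := by
    have hneg := mul_neg_of_pos_of_neg hk (mul_neg_of_pos_of_neg hx hf'')
    rw [abs_lt]; constructor <;> linarith
  obtain ⟨lam, hlam, hcontr⟩ := hF'.eventually_contraction_on_closedBall hrate
  obtain ⟨r, hFr, hr⟩ := ((hcontr.filter_mono nhdsWithin_le_nhds).and (Ioo_mem_nhdsGT hx)).exists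
  exact ⟨lam, hlam, r, hr, by rwa [hFx] at hFr⟩

theorem local_determinacy_bubbly_equilibrium_general (β δ G φ : ℝ)
    (hβ : β ∈ Set.Ioo (0 : ℝ) 1) (hG : 1 < G)
    (hφ : φ ∈ Set.Ioo (0 : ℝ) 1)
    (f : ℝ → ℝ) (hf : ContDiffOn ℝ 2 f (Set.Ioi 0))
    (y_b : ℝ) (hy_b : 0 < y_b)
    (hss : deriv f y_b + 1 - δ = ((1 - β + φ * β) / (φ * β)) * G)
    (hf'' : deriv (deriv f) y_b < 0)
    (heig : y_b * deriv (deriv f) y_b > -(2 * G * (1 - β + φ * β) / (φ * β))) :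
    ∃ ε > 0, ∀ y₀ : ℝ, 0 < y₀ → |y₀ - y_b| < ε → ∀ D : ℝ, 0 ≤ D → D < ε →
      ∀ y : ℕ → ℝ, y 0 = y₀ →
        (∀ t : ℕ, y (t + 1) =
          (1 / G) * (φ * β / (1 - β + φ * β)) *
            (y t * (deriv f (y t) + 1 - δ) + D / G ^ t)) →
        (∀ t : ℕ, 0 < y t) ∧ Filter.Tendsto y Filter.atTop (nhds y_b) := by
  obtain ⟨hβ₀, hβ₁⟩ := hβ
  obtain ⟨hφ₀, hφ₁⟩ := hφ
  have hG₀ : 0 < G := by linarith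
  have hden : 0 < 1 - β + φ * β := by nlinarith
  set k := (1 / G) * (φ * β / (1 - β + φ * β)) with hk
  have hk₀ : 0 < k := by positivity
  have hkss : k * (deriv f y_b + (1 - δ)) = 1 := by
    rw [← add_sub_assoc, hss, hk]; field_simp
  have heig' : -2 < k * (y_b * deriv (deriv f) y_b) := by
    have h2k : 2 * G * (1 - β + φ * β) / (φ * β) * k = 2 := by rw [hk]; field_simp
    nlinarith
  obtain ⟨lam, hlam, r, ⟨hr₀, hry_b⟩, hFr⟩ := exists_contraction_of_fixed_point_of_deriv_deriv_neg
    (hf.contDiffAt (isOpen_Ioi.mem_nhds hy_b)) hy_b hk₀ hkss hf'' heig'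
  set ρ : ℝ := max lam G⁻¹
  have hρ₁ : ρ < 1 := max_lt hlam (inv_lt_one_of_one_lt₀ hG)
  have hlam₁ : 0 < 1 - (lam : ℝ) := by simpa using hlam
  refine ⟨min r ((1 - lam) * r / (k * G)), by positivity,
    fun y₀ _ hy₀ D hD₀ hD y hy0 hrec => ?_⟩
  have herr : ∀ t, dist (y (t + 1)) (k * (y t * (deriv f (y t) + (1 - δ)))) ≤
      k * G * D * ρ ^ (t + 1) := by
    intro t
    have : y (t + 1) - k * (y t * (deriv f (y t) + (1 - δ))) = k * G * D * G⁻¹ ^ (t + 1) := by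
      rw [hrec, inv_pow, pow_succ]; field_simp; ring
    rw [Real.dist_eq, this, abs_of_nonneg (by positivity)]
    gcongr
    exact le_max_right _ _
  have hc : k * G * D ≤ (1 - lam) * r := by
    rw [← le_div_iff₀' (by positivity)]; exact hD.le.trans (min_le_right _ _)
  have hy₀r : dist (y 0) y_b ≤ r := by
    rw [hy0, Real.dist_eq]; exact hy₀.le.trans (min_le_left _ _)
  refine ⟨fun t => ?_, tendsto_of_perturbed_contraction hFr herr (by positivity) hρ₁
    (le_max_left _ _) (by positivity) hc hy₀r⟩
  have := dist_le_of_perturbed_contraction hFr herr (by positivity) hρ₁.le (by positivity) hc hy₀r t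
  rw [Real.dist_eq, abs_le] at this
  linarith

theorem local_determinacy_bubbly_equilibrium (β δ G φ : ℝ)
    (hβ : β ∈ Set.Ioo (0 : ℝ) 1) (hδ : δ ∈ Set.Icc (0 : ℝ) 1) (hG : 1 < G)
    (hφ : φ ∈ Set.Ioo (0 : ℝ) 1)
    (f : ℝ → ℝ) (hf : ContDiffOn ℝ 2 f (Set.Ioi 0))
    (y_b : ℝ) (hy_b : 0 < y_b)
    (hss : deriv f y_b + 1 - δ = ((1 - β + φ * β) / (φ * β)) * G)
    (hf'' : deriv (deriv f) y_b < 0)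
    (heig : y_b * deriv (deriv f) y_b > -(2 * G * (1 - β + φ * β) / (φ * β))) :
    ∃ ε > 0, ∀ y₀ : ℝ, 0 < y₀ → |y₀ - y_b| < ε → ∀ D : ℝ, 0 ≤ D → D < ε →
      ∀ y : ℕ → ℝ, y 0 = y₀ →
        (∀ t : ℕ, y (t + 1) =
          (1 / G) * (φ * β / (1 - β + φ * β)) *
            (y t * (deriv f (y t) + 1 - δ) + D / G ^ t)) →
        (∀ t : ℕ, 0 < y t) ∧ Filter.Tendsto y Filter.atTop (nhds y_b) :=
  local_determinacy_bubbly_equilibrium_general β δ G φ hβ hG hφ f hf y_b hy_b hss hf'' heig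
end
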